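/- Let μ₁ : ℝ → ℝ be the ground state energy μ₁(ξ) of the operator H[a,m,α;ξ] = -∂_t(w(t)∂_t) + w(t)(t-ξ)² + αV(t) on ℝ, defined variationally by μ₁(ξ) = inf over nonzero u in B¹(ℝ) of q[ξ](u)/‖u‖², where q[ξ](u) = ∫_{ℝ₊}(|u'|² + (t-ξ)²|u|² - α|u|²) dt + ∫_{ℝ₋}((1/m)(|u'|² + (t-ξ)²|u|²) + aα|u|²) dt. Then for all α > 0, inf_ξ μ₁(ξ) + α ≥ min(Θ₀, Θ₀/m + (a+1)α), where Θ₀ is the bottom of the spectrum of the Neumann realization of -d²/dt² + (t-ξ)² on ℝ₊ minimized over ξ. -/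

import Mathlib

/-!
Split `q[ξ](u)` at `t = 0`. On `ℝ₊` the Neumann problem gives
`Θ₀ ∫_{ℝ₊} u² ≤ ∫_{ℝ₊} (u'² + (t - ξ)² u²)`, and the same bound holds on `ℝ₋` after the
reflection `t ↦ -t`, `ξ ↦ -ξ`. Hence
`q[ξ](u) + α ∫ u² ≥ Θ₀ ∫_{ℝ₊} u² + (Θ₀ / m + (a + 1) α) ∫_{ℝ₋} u² ≥ min(Θ₀, Θ₀ / m + (a + 1) α) ∫ u²`.
-/

open MeasureTheory Set

/-- The quadratic form `q[a,m,α;ξ]` of the model operator `H[a,m,α;ξ]` on the line. -/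
noncomputable def qform (a m α ξ : ℝ) (u : ℝ → ℝ) : ℝ :=
  (∫ t in Ioi (0 : ℝ), ((deriv u t) ^ 2 + (t - ξ) ^ 2 * (u t) ^ 2 - α * (u t) ^ 2)) +
  (∫ t in Iio (0 : ℝ), ((1 / m) * ((deriv u t) ^ 2 + (t - ξ) ^ 2 * (u t) ^ 2)
      + a * α * (u t) ^ 2))

/-- Membership in the form domain `B¹(ℝ) = H¹(ℝ) ∩ L²(ℝ, |t| dt)` (together with
the finiteness of the harmonic-oscillator energy). -/
def memB1 (u : ℝ → ℝ) : Prop :=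
  Differentiable ℝ u ∧ Integrable (fun t => (u t) ^ 2) ∧
  Integrable (fun t => (deriv u t) ^ 2) ∧
  Integrable (fun t => |t| * (u t) ^ 2) ∧
  Integrable (fun t => t ^ 2 * (u t) ^ 2)

/-- The ground state energy `μ₁(a,m,α;ξ)`, defined variationally. -/
noncomputable def mu1 (a m α ξ : ℝ) : ℝ :=
  sInf {r : ℝ | ∃ u : ℝ → ℝ, memB1 u ∧ (∫ t, (u t) ^ 2) ≠ 0 ∧
    r = qform a m α ξ u / ∫ t, (u t) ^ 2}

/-- The de Gennes constant `Θ₀`: the infimum over `ξ` of the bottom of the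
spectrum of the Neumann realization of `-d²/dt² + (t-ξ)²` on `ℝ₊`,
defined variationally. -/
noncomputable def Theta0 : ℝ :=
  ⨅ ξ : ℝ, sInf {r : ℝ | ∃ u : ℝ → ℝ, Differentiable ℝ u ∧
    IntegrableOn (fun t => (u t) ^ 2) (Ioi 0) ∧
    IntegrableOn (fun t => (deriv u t) ^ 2 + (t - ξ) ^ 2 * (u t) ^ 2) (Ioi 0) ∧
    (∫ t in Ioi (0 : ℝ), (u t) ^ 2) ≠ 0 ∧
    r = (∫ t in Ioi (0 : ℝ), ((deriv u t) ^ 2 + (t - ξ) ^ 2 * (u t) ^ 2)) /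
        ∫ t in Ioi (0 : ℝ), (u t) ^ 2}

noncomputable def oscDensity (ξ : ℝ) (u : ℝ → ℝ) (t : ℝ) : ℝ :=
  deriv u t ^ 2 + (t - ξ) ^ 2 * u t ^ 2

def neumannQuotients (ξ : ℝ) : Set ℝ :=
  {r : ℝ | ∃ u : ℝ → ℝ, Differentiable ℝ u ∧
    IntegrableOn (fun t => u t ^ 2) (Ioi 0) ∧
    IntegrableOn (oscDensity ξ u) (Ioi 0) ∧
    (∫ t in Ioi (0 : ℝ), u t ^ 2) ≠ 0 ∧
    r = (∫ t in Ioi (0 : ℝ), oscDensity ξ u t) / ∫ t in Ioi (0 : ℝ), u t ^ 2}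

lemma Theta0_eq_iInf_sInf_neumannQuotients : Theta0 = ⨅ ξ : ℝ, sInf (neumannQuotients ξ) := rfl

lemma oscDensity_nonneg (ξ : ℝ) (u : ℝ → ℝ) (t : ℝ) : 0 ≤ oscDensity ξ u t := by
  unfold oscDensity; positivity

lemma oscDensity_comp_neg (ξ : ℝ) (u : ℝ → ℝ) (t : ℝ) :
    oscDensity (-ξ) (fun s => u (-s)) t = oscDensity ξ u (-t) := by
  simp only [oscDensity, deriv_comp_neg]
  ring

lemma zero_mem_lowerBounds_neumannQuotients (ξ : ℝ) : 0 ∈ lowerBounds (neumannQuotients ξ) := by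
  rintro r ⟨u, -, -, -, -, rfl⟩
  exact div_nonneg (setIntegral_nonneg measurableSet_Ioi fun t _ => oscDensity_nonneg ξ u t)
    (setIntegral_nonneg measurableSet_Ioi fun t _ => sq_nonneg _)

lemma Theta0_le_sInf_neumannQuotients (ξ : ℝ) : Theta0 ≤ sInf (neumannQuotients ξ) := by
  rw [Theta0_eq_iInf_sInf_neumannQuotients]
  refine ciInf_le ⟨0, ?_⟩ ξ
  rintro r ⟨ξ', rfl⟩
  exact Real.sInf_nonneg (zero_mem_lowerBounds_neumannQuotients ξ')

lemma Theta0_mul_integral_Ioi_le {u : ℝ → ℝ} (ξ : ℝ) (hd : Differentiable ℝ u)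
    (hu : IntegrableOn (fun t => u t ^ 2) (Ioi 0)) (hE : IntegrableOn (oscDensity ξ u) (Ioi 0)) :
    Theta0 * ∫ t in Ioi (0 : ℝ), u t ^ 2 ≤ ∫ t in Ioi (0 : ℝ), oscDensity ξ u t := by
  have hD : 0 ≤ ∫ t in Ioi (0 : ℝ), u t ^ 2 :=
    setIntegral_nonneg measurableSet_Ioi fun t _ => sq_nonneg _
  rcases hD.eq_or_lt with hD | hD
  · rw [← hD, mul_zero]
    exact setIntegral_nonneg measurableSet_Ioi fun t _ => oscDensity_nonneg ξ u t
  · rw [← le_div_iff₀ hD]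
    exact (Theta0_le_sInf_neumannQuotients ξ).trans <|
      csInf_le ⟨0, zero_mem_lowerBounds_neumannQuotients ξ⟩ ⟨u, hd, hu, hE, hD.ne', rfl⟩

lemma setIntegral_Iio_zero_eq_Ioi_comp_neg (f : ℝ → ℝ) :
    ∫ t in Iio (0 : ℝ), f t = ∫ t in Ioi (0 : ℝ), f (-t) := by
  rw [integral_comp_neg_Ioi, neg_zero, integral_Iic_eq_integral_Iio]

lemma Theta0_mul_integral_Iio_le {u : ℝ → ℝ} (ξ : ℝ) (hd : Differentiable ℝ u)
    (hu : IntegrableOn (fun t => u t ^ 2) (Iio 0)) (hE : IntegrableOn (oscDensity ξ u) (Iio 0)) :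
    Theta0 * ∫ t in Iio (0 : ℝ), u t ^ 2 ≤ ∫ t in Iio (0 : ℝ), oscDensity ξ u t := by
  have hE' : IntegrableOn (oscDensity (-ξ) fun s => u (-s)) (Ioi 0) := by
    simp only [funext (oscDensity_comp_neg ξ u)]
    exact (neg_zero (G := ℝ) ▸ hE).comp_neg_Ioi
  have := Theta0_mul_integral_Ioi_le (u := fun s => u (-s)) (-ξ) (hd.comp differentiable_neg)
    (neg_zero (G := ℝ) ▸ hu).comp_neg_Ioi hE'
  simpa only [setIntegral_Iio_zero_eq_Ioi_comp_neg, oscDensity_comp_neg] using this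

lemma memB1_of_contDiff_of_hasCompactSupport {u : ℝ → ℝ} (hu : ContDiff ℝ 1 u)
    (hc : HasCompactSupport u) : memB1 u := by
  have hsq : HasCompactSupport fun t => u t ^ 2 :=
    hc.comp_left (g := fun x : ℝ => x ^ 2) (zero_pow two_ne_zero)
  have hcont : Continuous fun t => u t ^ 2 := hu.continuous.pow 2
  have hintegrable (f : ℝ → ℝ) (hf : Continuous f) (hfc : HasCompactSupport f) : Integrable f :=
    hf.integrable_of_hasCompactSupport hfc
  exact ⟨hu.differentiable one_ne_zero, hintegrable _ hcont hsq,
    hintegrable _ ((hu.continuous_deriv le_rfl).pow 2)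
      (hc.deriv.comp_left (g := fun x : ℝ => x ^ 2) (zero_pow two_ne_zero)),
    hintegrable _ (continuous_abs.mul hcont) hsq.mul_left,
    hintegrable _ ((continuous_pow 2).mul hcont) hsq.mul_left⟩

lemma exists_memB1_integral_sq_ne_zero : ∃ u : ℝ → ℝ, memB1 u ∧ (∫ t, u t ^ 2) ≠ 0 := by
  let f : ContDiffBump (0 : ℝ) := ⟨1, 2, one_pos, one_lt_two⟩
  have hf0 : f 0 ^ 2 ≠ 0 := by simp [f.one_of_mem_closedBall (x := 0) (by simp [f.rIn_pos.le])]
  have hcont : Continuous fun t => f t ^ 2 := f.continuous.pow 2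
  have hsq : HasCompactSupport fun t => f t ^ 2 :=
    f.hasCompactSupport.comp_left (g := fun x : ℝ => x ^ 2) (zero_pow two_ne_zero)
  exact ⟨f, memB1_of_contDiff_of_hasCompactSupport f.contDiff f.hasCompactSupport,
    (hcont.integral_pos_of_hasCompactSupport_nonneg_nonzero hsq (fun t => sq_nonneg _) hf0).ne'⟩

lemma memB1.integrable_oscDensity {u : ℝ → ℝ} (hu : memB1 u) (ξ : ℝ) :
    Integrable (oscDensity ξ u) := by
  obtain ⟨hd, h2, hd2, habs, hsq⟩ := hu
  have ht : Integrable fun t => t * u t ^ 2 :=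
    habs.mono' (continuous_id.mul (hd.continuous.pow 2)).aestronglyMeasurable
      (.of_forall fun t => by rw [Real.norm_eq_abs, abs_mul, abs_sq])
  have hpot : Integrable fun t => (t - ξ) ^ 2 * u t ^ 2 := by
    refine ((hsq.sub (ht.const_mul (2 * ξ))).add (h2.const_mul (ξ ^ 2))).congr
      (.of_forall fun t => ?_)
    simp only [Pi.add_apply, Pi.sub_apply]
    ring
  exact hd2.add hpot

lemma integral_eq_Iio_add_Ioi {f : ℝ → ℝ} (hf : Integrable f) :
    ∫ t, f t = (∫ t in Iio (0 : ℝ), f t) + ∫ t in Ioi (0 : ℝ), f t := by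
  rw [← integral_Iic_eq_integral_Iio]
  exact (intervalIntegral.integral_Iic_add_Ioi hf.integrableOn hf.integrableOn).symm

lemma qform_eq {u : ℝ → ℝ} (hu : memB1 u) (a m α ξ : ℝ) :
    qform a m α ξ u =
      (∫ t in Ioi (0 : ℝ), oscDensity ξ u t) - α * (∫ t in Ioi (0 : ℝ), u t ^ 2) +
      ((1 / m) * (∫ t in Iio (0 : ℝ), oscDensity ξ u t) + a * α * ∫ t in Iio (0 : ℝ), u t ^ 2) := by
  have hE := hu.integrable_oscDensity ξ
  have h2 := hu.2.1
  rw [qform, ← integral_const_mul, ← integral_const_mul, ← integral_const_mul,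
    ← integral_sub hE.integrableOn (h2.const_mul α).integrableOn,
    ← integral_add (hE.const_mul _).integrableOn (h2.const_mul _).integrableOn]
  rfl

lemma min_sub_le_qform_div {u : ℝ → ℝ} {m : ℝ} (a α ξ : ℝ) (hm : 0 < m) (hu : memB1 u)
    (hne : (∫ t, u t ^ 2) ≠ 0) :
    min Theta0 (Theta0 / m + (a + 1) * α) - α ≤ qform a m α ξ u / ∫ t, u t ^ 2 := by
  have h2 := hu.2.1
  have hE := hu.integrable_oscDensity ξ
  have hp := Theta0_mul_integral_Ioi_le ξ hu.1 h2.integrableOn hE.integrableOn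
  have hn := Theta0_mul_integral_Iio_le ξ hu.1 h2.integrableOn hE.integrableOn
  rw [integral_eq_Iio_add_Ioi h2] at hne ⊢
  rw [qform_eq hu]
  set Dp := ∫ t in Ioi (0 : ℝ), u t ^ 2
  set Dn := ∫ t in Iio (0 : ℝ), u t ^ 2
  set M := min Theta0 (Theta0 / m + (a + 1) * α)
  have hDp : 0 ≤ Dp := setIntegral_nonneg measurableSet_Ioi fun t _ => sq_nonneg _
  have hDn : 0 ≤ Dn := setIntegral_nonneg measurableSet_Iio fun t _ => sq_nonneg _
  have hMp : M * Dp ≤ Theta0 * Dp := mul_le_mul_of_nonneg_right (min_le_left _ _) hDp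
  have hMn : M * Dn ≤ (Theta0 / m + (a + 1) * α) * Dn :=
    mul_le_mul_of_nonneg_right (min_le_right _ _) hDn
  have hn' : Theta0 / m * Dn ≤ 1 / m * ∫ t in Iio (0 : ℝ), oscDensity ξ u t := by
    rw [div_mul_eq_mul_div, one_div_mul_eq_div]
    exact div_le_div_of_nonneg_right hn hm.le
  rw [le_div_iff₀ ((add_nonneg hDn hDp).lt_of_ne' hne)]
  linarith

theorem stmt_5_general (a m α : ℝ) (hm : 0 < m) :
    min Theta0 (Theta0 / m + (a + 1) * α) ≤ (⨅ ξ : ℝ, mu1 a m α ξ) + α := by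
  rw [← sub_le_iff_le_add]
  refine le_ciInf fun ξ => le_csInf ?_ ?_
  · obtain ⟨u, hu, hne⟩ := exists_memB1_integral_sq_ne_zero
    exact ⟨_, u, hu, hne, rfl⟩
  · rintro r ⟨u, hu, hne, rfl⟩
    exact min_sub_le_qform_div a α ξ hm hu hne

/-- Lower bound (3.8) of the paper: for all `α > 0`,
`inf_ξ μ₁(a,m,α;ξ) + α ≥ min(Θ₀, Θ₀/m + (a+1)α)`. -/
theorem stmt_5 (a m α : ℝ) (ha : 0 < a) (hm : 0 < m) (hα : 0 < α) :
    min Theta0 (Theta0 / m + (a + 1) * α) ≤ (⨅ ξ : ℝ, mu1 a m α ξ) + α :=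
  stmt_5_general a m α hm
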